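/- Let Γ be a quotient of S^LMC, equipped with the quotient topology. Then the map γ : S^LMC → Γ, sending each p̃ ∈ S^LMC to the unique member of Γ contained in p̃, is a topological quotient map. -/

import Mathlib

open Set Topology WeakDual BoundedContinuousFunction

noncomputable section

variable (S : Type*) [TopologicalSpace S] [T2Space S] [Semigroup S]

/-- Left translation `λ_s`, as a continuous map, given continuity of left translations. -/
def lamC (hl : ∀ s : S, Continuous (fun t => s * t)) (s : S) : C(S, S) :=
  ⟨fun t => s * t, hl s⟩

/-- An m-admissible subalgebra of `CB(S) = S →ᵇ ℂ`. -/
structure MAdmissible (hl : ∀ s : S, Continuous (fun t => s * t)) : Type _ where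
  carrier : StarSubalgebra ℂ (S →ᵇ ℂ)
  isClosed' : IsClosed (carrier : Set (S →ᵇ ℂ))
  leftInvariant : ∀ (s : S), ∀ f ∈ carrier, f.compContinuous (lamC S hl s) ∈ carrier
  mAdmissible : ∀ (μ : characterSpace ℂ carrier) (f : S →ᵇ ℂ) (hf : f ∈ carrier),
    ∃ g ∈ carrier, ∀ s : S,
      g s = μ ⟨f.compContinuous (lamC S hl s), leftInvariant s f hf⟩

variable {hl : ∀ s : S, Continuous (fun t => s * t)}

/-- The spectrum `S^F` of an m-admissible subalgebra. -/
abbrev specF (F : MAdmissible S hl) : Type _ := characterSpace ℂ F.carrier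

/-- Evaluation at a point, as an algebra homomorphism on `F`. -/
def evalHom (F : MAdmissible S hl) (s : S) : F.carrier →ₐ[ℂ] ℂ where
  toFun f := (f : S →ᵇ ℂ) s
  map_one' := rfl
  map_mul' _ _ := rfl
  map_zero' := rfl
  map_add' _ _ := rfl
  commutes' _ := rfl

/-- The evaluation map `ε : S → S^F`. -/
def epsF (F : MAdmissible S hl) (s : S) : specF S F :=
  haveI : CompleteSpace F.carrier := IsClosed.completeSpace_coe (hs := F.isClosed')
  CharacterSpace.equivAlgHom.symm (evalHom S F s)

variable (F : MAdmissible S hl)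

/-- `Z(F)`: the collection of zero sets of members of `F`. -/
def ZSet : Set (Set S) := {A | ∃ f ∈ F.carrier, A = {s : S | f s = 0}}

/-- z-filters on `F`. -/
def IsZFilter (𝒜 : Set (Set S)) : Prop :=
  𝒜 ⊆ ZSet S F ∧ ∅ ∉ 𝒜 ∧ Set.univ ∈ 𝒜 ∧
    (∀ A ∈ 𝒜, ∀ B ∈ 𝒜, A ∩ B ∈ 𝒜) ∧
    ∀ A ∈ 𝒜, ∀ B ∈ ZSet S F, A ⊆ B → B ∈ 𝒜

/-- `FS`: the collection of z-ultrafilters on `F`. -/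
def zUltra : Set (Set (Set S)) :=
  {p | IsZFilter S F p ∧ ∀ q, IsZFilter S F q → p ⊆ q → q = p}

/-- `cl ε(A)` in `S^F`. -/
def epsCl (A : Set S) : Set (specF S F) := closure (epsF S F '' A)

/-- `⋂_{A ∈ p} cl ε(A)`; for `p ∈ FS` this is the singleton of the corresponding point of `S^F`. -/
def core (p : Set (Set S)) : Set (specF S F) := ⋂ A ∈ p, epsCl S F A

/-- `p̃ = ⋂ [p]`, the intersection of the equivalence class of `p`. -/
def tilde (p : Set (Set S)) : Set (Set S) :=
  ⋂₀ {q | q ∈ zUltra S F ∧ core S F q = core S F p}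

/-- pure z-filters. -/
def IsPure (𝒜 : Set (Set S)) : Prop :=
  IsZFilter S F 𝒜 ∧ ∀ p ∈ zUltra S F, 𝒜 ⊆ p → 𝒜 ⊆ tilde S F p

/-- `bar(𝒜) = {p̃ : 𝒜 ⊆ p}`, viewed as a subset of `S^F` via the identification of
`p̃` with the point `μ` such that `⋂_{A ∈ p} cl ε(A) = {μ}`. -/
def barSet (𝒜 : Set (Set S)) : Set (specF S F) :=
  {μ | ∃ p ∈ zUltra S F, 𝒜 ⊆ p ∧ core S F p = {μ}}

/-- `𝒜° = {A ∈ 𝒜 : bar(𝒜) ⊆ int cl ε(A)}`. -/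
def circA (𝒜 : Set (Set S)) : Set (Set S) :=
  {A ∈ 𝒜 | barSet S F 𝒜 ⊆ interior (epsCl S F A)}

/-- `⋂ J`, the intersection of the z-filters `p̃` corresponding to points of `J ⊆ S^F`. -/
def interOf (J : Set (specF S F)) : Set (Set S) :=
  ⋂₀ {C | ∃ p ∈ zUltra S F, ∃ μ ∈ J, core S F p = {μ} ∧ C = tilde S F p}

/-- `⋂ [p̃]_R` for a relation `r` on `S^F`. -/
def classInter (r : specF S F → specF S F → Prop) (μ : specF S F) : Set (Set S) :=
  interOf S F {ν | r μ ν}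

/-- `Ω_ℬ(A) = {x ∈ S : λ_x⁻¹(A) ∈ ℬ}`. -/
def OmegaZ (ℬ : Set (Set S)) (A : Set S) : Set S := {x : S | (fun t => x * t) ⁻¹' A ∈ ℬ}

/-- `𝒜 + ℬ`. -/
def zsum (𝒜 ℬ : Set (Set S)) : Set (Set S) :=
  {A ∈ ZSet S F | ∀ F' ∈ ZSet S F, OmegaZ S ℬ A ⊆ F' → F' ∈ 𝒜}

/-- `𝒜 ⊙ ℬ = ⋂ bar(𝒜 + ℬ)`. -/
def odot (𝒜 ℬ : Set (Set S)) : Set (Set S) :=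
  interOf S F (barSet S F (zsum S F 𝒜 ℬ))

/-- topological choice functions for a set `Γ` of z-filters. -/
def IsTCF (Γ : Set (Set (Set S))) (f : Set (Set S) → Set S) : Prop :=
  ∀ L ∈ Γ, f L ∈ L ∧ barSet S F L ⊆ interior (epsCl S F (f L))

/-- `A* = {𝓛 ∈ Γ : bar(𝓛) ∩ cl ε(A) ≠ ∅}`. -/
def starSet (Γ : Set (Set (Set S))) (A : Set S) : Set Γ :=
  {L : Γ | (barSet S F (L : Set (Set S)) ∩ epsCl S F A).Nonempty}

/-- `A_* = {𝓛 ∈ Γ : bar(𝓛) ⊆ cl ε(A)}`. -/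
def lowStar (Γ : Set (Set (Set S))) (A : Set S) : Set Γ :=
  {L : Γ | barSet S F (L : Set (Set S)) ⊆ epsCl S F A}

/-- The `τ*` quotient topology on `Γ`. -/
def tauStar (Γ : Set (Set (Set S))) : TopologicalSpace Γ :=
  TopologicalSpace.generateFrom {U | ∃ A ∈ ZSet S F, U = (starSet S F Γ A)ᶜ}

/-- The `τ_*` quotient topology on `Γ`. -/
def tauLow (Γ : Set (Set (Set S))) : TopologicalSpace Γ :=
  TopologicalSpace.generateFrom {U | ∃ A ∈ ZSet S F, U = (lowStar S F Γ A)ᶜ}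

/-- `Γ` is a quotient of `S^F`: conditions (a) and (b) of Theorem 3.9. -/
def IsQuotientOf (Γ : Set (Set (Set S))) : Prop :=
  (∀ L ∈ Γ, IsPure S F L) ∧
  (∀ f : Set (Set S) → Set S, IsTCF S F Γ f →
    ∃ 𝓕 : Finset (Set (Set S)), ↑𝓕 ⊆ Γ ∧
      (Set.univ : Set (specF S F)) = ⋃ L ∈ 𝓕, interior (epsCl S F (f L))) ∧
  (∀ L ∈ Γ, ∀ K ∈ Γ, L ≠ K →
    ∃ A ∈ circA S F L, ∃ B ∈ circA S F K, ∀ C ∈ Γ,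
      (∀ H ∈ ZSet S F, (interior (epsCl S F A))ᶜ ⊆ interior (epsCl S F H) → H ∈ C) ∨
      (∀ T ∈ ZSet S F, (interior (epsCl S F B))ᶜ ⊆ interior (epsCl S F T) → T ∈ C))

/-- The defining property of the map `γ : S^F → Γ` sending `p̃` to the unique member of `Γ`
contained in `p̃`. -/
def IsGamma (Γ : Set (Set (Set S))) (γ : specF S F → Γ) : Prop :=
  ∀ (μ : specF S F) (p : Set (Set S)), p ∈ zUltra S F → core S F p = {μ} →
    (γ μ : Set (Set S)) ⊆ tilde S F p

/-- The defining property of the multiplication of `S^F`: `(μν)(f) = μ(T_ν f)` where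
`(T_ν f)(s) = ν(L_s f)`. -/
def IsSpecMul (mul : specF S F → specF S F → specF S F) : Prop :=
  ∀ (μ ν : specF S F) (f : S →ᵇ ℂ) (hf : f ∈ F.carrier) (g : S →ᵇ ℂ) (hg : g ∈ F.carrier),
    (∀ s : S, g s = ν ⟨f.compContinuous (lamC S hl s), F.leftInvariant s f hf⟩) →
    mul μ ν ⟨f, hf⟩ = μ ⟨g, hg⟩

/-- `LMC(S)`, as a subset of `CB(S)`. -/
def LMCset (hl : ∀ s : S, Continuous (fun t => s * t)) : Set (S →ᵇ ℂ) :=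
  {f | ∀ μ : characterSpace ℂ (S →ᵇ ℂ),
    Continuous fun s : S => μ (f.compContinuous (lamC S hl s))}

/-! Every member `L` of `Γ` is a z-filter with `bar(L) = ⋂_{A ∈ L} cl ε(A)`, and condition (b)
makes these bars pairwise disjoint, so the fibres of `γ` are exactly the bars and `γ` pulls the
basic τ*-open set `Γ ∖ A*` back to the points whose fibre misses `cl ε(A)`. That set is open: near
a point `ν₀` with fibre `bar(L₀)`, apply (a) to the choice function picking a zero set `E ∈ L₀`
whose closure is a neighbourhood of `bar(L₀)` missing `cl ε(A)`, and picking for `L ≠ L₀` the set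
that (b) provides against `L₀`; the finite cover then traps every fibre near `ν₀` inside `cl ε(E)`.
Conversely, a set with open preimage is τ*-open because disjoint closed sets of the compact space
`S^F` are separated by closures of zero sets. -/

section ZeroSets

omit [T2Space S]

instance isClosed_carrier : IsClosed (F.carrier : Set (S →ᵇ ℂ)) := F.isClosed'

variable {S F}

theorem epsF_apply (s : S) (f : F.carrier) : epsF S F s f = (f : S →ᵇ ℂ) s := rfl

theorem exists_gelfandTransform_eq (g : C(specF S F, ℂ)) :
    ∃ f : F.carrier, ∀ μ : specF S F, μ f = g μ := by
  obtain ⟨f, hf⟩ := (gelfandTransform_bijective (A := F.carrier)).2 g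
  exact ⟨f, fun μ => by rw [← hf]; rfl⟩

theorem epsCl_setOf_eq_zero_subset (f : F.carrier) :
    epsCl S F {s | (f : S →ᵇ ℂ) s = 0} ⊆ {μ | μ f = 0} :=
  closure_minimal (by rintro _ ⟨s, hs, rfl⟩; exact hs)
    (isClosed_eq ((WeakDual.eval_continuous f).comp continuous_subtype_val) continuous_const)

theorem epsF_mem_epsCl_iff {H : Set S} (hH : H ∈ ZSet S F) (s : S) :
    epsF S F s ∈ epsCl S F H ↔ s ∈ H := by
  obtain ⟨f, hf, rfl⟩ := hH
  exact ⟨fun hs => epsCl_setOf_eq_zero_subset ⟨f, hf⟩ hs, fun hs => subset_closure ⟨s, hs, rfl⟩⟩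

theorem denseRange_epsF : DenseRange (epsF S F) := by
  refine dense_iff_closure_eq.2 (eq_univ_of_forall fun μ => by_contra fun hμ => ?_)
  obtain ⟨g, hg0, hg1, -⟩ := exists_continuous_zero_one_of_isClosed isClosed_closure
    isClosed_singleton (disjoint_singleton_right.2 hμ)
  obtain ⟨f, hf⟩ := exists_gelfandTransform_eq (ContinuousMap.comp ⟨_, Complex.continuous_ofReal⟩ g)
  have hf0 : f = 0 := Subtype.ext <| BoundedContinuousFunction.ext fun s => by
    simpa [epsF_apply, hg0 (subset_closure (mem_range_self s))] using hf (epsF S F s)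
  simpa [hf0, hg1 rfl] using hf μ

theorem epsCl_univ : epsCl S F univ = univ := by
  rw [epsCl, image_univ, denseRange_epsF.closure_range]

theorem subset_interior_epsCl {W : Set (specF S F)} (hW : IsOpen W) {H : Set S}
    (hWH : ∀ s, epsF S F s ∈ W → s ∈ H) : W ⊆ interior (epsCl S F H) :=
  interior_maximal (fun _ hx => closure_mono (by rintro _ ⟨hs, s, rfl⟩; exact ⟨s, hWH s hs, rfl⟩)
    (denseRange_epsF.open_subset_closure_inter hW hx)) hW

theorem univ_mem_ZSet : univ ∈ ZSet S F :=
  ⟨0, zero_mem _, by ext; simp⟩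

theorem inter_mem_ZSet {A B : Set S} (hA : A ∈ ZSet S F) (hB : B ∈ ZSet S F) :
    A ∩ B ∈ ZSet S F := by
  obtain ⟨f, hf, rfl⟩ := hA
  obtain ⟨g, hg, rfl⟩ := hB
  refine ⟨f * star f + g * star g,
    add_mem (mul_mem hf (star_mem hf)) (mul_mem hg (star_mem hg)), ?_⟩
  ext s
  simp only [mem_inter_iff, mem_ofPred_eq, coe_add, coe_mul, coe_star, Pi.add_apply, Pi.mul_apply,
    Pi.star_apply, RCLike.star_def, Complex.mul_conj, ← Complex.ofReal_add, Complex.ofReal_eq_zero]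
  rw [add_eq_zero_iff_of_nonneg (Complex.normSq_nonneg _) (Complex.normSq_nonneg _)]
  simp only [Complex.normSq_eq_zero]

theorem interior_epsCl_inter_subset {H₁ H₂ : Set S} (h₁ : H₁ ∈ ZSet S F) (h₂ : H₂ ∈ ZSet S F) :
    interior (epsCl S F H₁) ∩ interior (epsCl S F H₂) ⊆ interior (epsCl S F (H₁ ∩ H₂)) :=
  subset_interior_epsCl (isOpen_interior.inter isOpen_interior) fun s hs =>
    ⟨(epsF_mem_epsCl_iff h₁ s).1 (interior_subset hs.1),
      (epsF_mem_epsCl_iff h₂ s).1 (interior_subset hs.2)⟩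

theorem exists_zeroSet_separating {P Q : Set (specF S F)} (hP : IsClosed P) (hQ : IsClosed Q)
    (hPQ : Disjoint P Q) :
    ∃ H ∈ ZSet S F, P ⊆ interior (epsCl S F H) ∧ Disjoint (epsCl S F H) Q := by
  obtain ⟨V, hV, hPV, hVQ⟩ :=
    normal_exists_closure_subset hP hQ.isOpen_compl hPQ.subset_compl_right
  obtain ⟨g, hg0, hg1, -⟩ := exists_continuous_zero_one_of_isClosed isClosed_closure hQ
    (disjoint_compl_left.mono_left hVQ)
  obtain ⟨f, hf⟩ := exists_gelfandTransform_eq (ContinuousMap.comp ⟨_, Complex.continuous_ofReal⟩ g)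
  refine ⟨_, ⟨f, f.2, rfl⟩, hPV.trans (subset_interior_epsCl hV fun s hs => ?_),
    disjoint_left.2 fun μ hμ hμQ => ?_⟩
  · simpa [← epsF_apply, hg0 (subset_closure hs)] using hf (epsF S F s)
  · simpa [hg1 hμQ] using (epsCl_setOf_eq_zero_subset f hμ : μ f = 0).symm.trans (hf μ)

end ZeroSets

section ZFilters

omit [T2Space S]

variable {S F}

def nhdsZ (ν : specF S F) : Set (Set S) :=
  {H ∈ ZSet S F | ν ∈ interior (epsCl S F H)}

theorem isZFilter_of_base {𝓑 : Set (Set S)} (hne : 𝓑.Nonempty) (hempty : ∅ ∉ 𝓑)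
    (hdir : ∀ B₁ ∈ 𝓑, ∀ B₂ ∈ 𝓑, ∃ B ∈ 𝓑, B ⊆ B₁ ∩ B₂) :
    IsZFilter S F {Z ∈ ZSet S F | ∃ B ∈ 𝓑, B ⊆ Z} := by
  refine ⟨fun _ h => h.1, fun ⟨_, B, hB, hB0⟩ => hempty (subset_empty_iff.1 hB0 ▸ hB),
    ⟨univ_mem_ZSet, hne.some, hne.some_mem, subset_univ _⟩, ?_,
    fun _ ⟨_, B, hB, h⟩ _ hZ hsub => ⟨hZ, B, hB, h.trans hsub⟩⟩
  rintro Z₁ ⟨hZ₁, B₁, hB₁, h₁⟩ Z₂ ⟨hZ₂, B₂, hB₂, h₂⟩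
  obtain ⟨B, hB, hsub⟩ := hdir B₁ hB₁ B₂ hB₂
  exact ⟨inter_mem_ZSet hZ₁ hZ₂, B, hB, hsub.trans (inter_subset_inter h₁ h₂)⟩

theorem isZFilter_sUnion_of_isChain {c : Set (Set (Set S))} (hc : ∀ q ∈ c, IsZFilter S F q)
    (hchain : IsChain (· ⊆ ·) c) (hne : c.Nonempty) : IsZFilter S F (⋃₀ c) := by
  obtain ⟨q₀, hq₀⟩ := hne
  refine ⟨fun _ ⟨q, hq, hA⟩ => (hc q hq).1 hA, fun ⟨q, hq, h⟩ => (hc q hq).2.1 h,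
    ⟨q₀, hq₀, (hc q₀ hq₀).2.2.1⟩, ?_,
    fun _ ⟨q, hq, hA⟩ B hB hAB => ⟨q, hq, (hc q hq).2.2.2.2 _ hA B hB hAB⟩⟩
  rintro A ⟨q₁, hq₁, hA⟩ B ⟨q₂, hq₂, hB⟩
  rcases hchain.total hq₁ hq₂ with h | h
  · exact ⟨q₂, hq₂, (hc q₂ hq₂).2.2.2.1 A (h hA) B hB⟩
  · exact ⟨q₁, hq₁, (hc q₁ hq₁).2.2.2.1 A hA B (h hB)⟩

theorem IsZFilter.exists_zUltra_superset {L : Set (Set S)} (hL : IsZFilter S F L) :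
    ∃ p ∈ zUltra S F, L ⊆ p := by
  obtain ⟨p, hLp, hmax⟩ := zorn_subset_nonempty {q | IsZFilter S F q}
    (fun c hc hchain hne => ⟨⋃₀ c, isZFilter_sUnion_of_isChain hc hchain hne,
      fun _ => subset_sUnion_of_mem⟩) L hL
  exact ⟨p, ⟨hmax.1, fun q hq hpq => (hmax.2 hq hpq).antisymm hpq⟩, hLp⟩

theorem isZFilter_nhdsZ (ν : specF S F) : IsZFilter S F (nhdsZ ν) :=
  ⟨fun _ h => h.1, fun h => by simpa [epsCl] using h.2,
    ⟨univ_mem_ZSet, by simp [epsCl_univ]⟩,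
    fun _ h₁ _ h₂ => ⟨inter_mem_ZSet h₁.1 h₂.1, interior_epsCl_inter_subset h₁.1 h₂.1 ⟨h₁.2, h₂.2⟩⟩,
    fun _ h _ hB hsub => ⟨hB, interior_mono (closure_mono (image_mono hsub)) h.2⟩⟩

theorem mem_core_nhdsZ (ν : specF S F) : ν ∈ core S F (nhdsZ ν) :=
  mem_iInter₂.2 fun _ h => interior_subset h.2

theorem inter_nonempty_of_mem_epsCl {ν : specF S F} {B : Set S} (hB : ν ∈ epsCl S F B)
    {H : Set S} (hH : H ∈ nhdsZ ν) : (B ∩ H).Nonempty := by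
  obtain ⟨_, hint, s, hs, rfl⟩ := mem_closure_iff.1 hB _ isOpen_interior hH.2
  exact ⟨s, hs, (epsF_mem_epsCl_iff hH.1 s).1 (interior_subset hint)⟩

theorem core_subset_singleton_of_nhdsZ_subset {q : Set (Set S)} {ν : specF S F}
    (h : nhdsZ ν ⊆ q) : core S F q ⊆ {ν} := by
  intro μ hμ
  by_contra hne
  obtain ⟨H, hH, hνH, hHμ⟩ := exists_zeroSet_separating isClosed_singleton isClosed_singleton
    (disjoint_singleton.2 (Ne.symm hne))
  exact disjoint_singleton_right.1 hHμ (mem_iInter₂.1 hμ H (h ⟨hH, hνH rfl⟩))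

theorem IsZFilter.core_inter_nonempty {q : Set (Set S)} (hq : IsZFilter S F q)
    {K : Set (specF S F)} (hK : IsClosed K) (h : ∀ B ∈ q, (epsCl S F B ∩ K).Nonempty) :
    (core S F q ∩ K).Nonempty := by
  have : Nonempty q := ⟨⟨univ, hq.2.2.1⟩⟩
  have hdir : Directed (· ⊇ ·) fun B : q => epsCl S F B ∩ K := fun B C =>
    ⟨⟨B ∩ C, hq.2.2.2.1 B B.2 C C.2⟩,
      inter_subset_inter_left _ (closure_mono (image_mono inter_subset_left)),
      inter_subset_inter_left _ (closure_mono (image_mono inter_subset_right))⟩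
  simpa only [core, biInter_eq_iInter, iInter_inter] using
    IsCompact.nonempty_iInter_of_directed_nonempty_isCompact_isClosed _ hdir
      (fun B => h B B.2) (fun _ => (isClosed_closure.inter hK).isCompact)
      (fun _ => isClosed_closure.inter hK)

theorem IsZFilter.core_nonempty {q : Set (Set S)} (hq : IsZFilter S F q) :
    (core S F q).Nonempty := by
  simpa using hq.core_inter_nonempty isClosed_univ fun B hB => by
    rw [inter_univ]
    exact ((nonempty_iff_ne_empty.2 fun h => hq.2.1 (h ▸ hB)).image (epsF S F)).closure

theorem IsZFilter.exists_mem_disjoint {q : Set (Set S)} (hq : IsZFilter S F q)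
    {K : Set (specF S F)} (hK : IsClosed K) (h : Disjoint (core S F q) K) :
    ∃ B ∈ q, Disjoint (epsCl S F B) K := by
  by_contra! hcon
  exact not_disjoint_iff_nonempty_inter.2
    (hq.core_inter_nonempty hK fun B hB => not_disjoint_iff_nonempty_inter.1 (hcon B hB)) h

theorem IsZFilter.exists_mem_core_subset_interior {q : Set (Set S)} (hq : IsZFilter S F q)
    {K : Set (specF S F)} (hK : IsClosed K) (h : Disjoint (core S F q) K) :
    ∃ E ∈ q, core S F q ⊆ interior (epsCl S F E) ∧ Disjoint (epsCl S F E) K := by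
  obtain ⟨B, hB, hBK⟩ := hq.exists_mem_disjoint hK h
  obtain ⟨E, hE, hsub, hEK⟩ := exists_zeroSet_separating
    (isClosed_closure.union (isClosed_biInter fun _ _ => isClosed_closure)) hK
    (disjoint_union_left.2 ⟨hBK, h⟩)
  refine ⟨E, hq.2.2.2.2 B hB E hE fun s hs => ?_, subset_union_right.trans hsub, hEK⟩
  exact (epsF_mem_epsCl_iff hE s).1 <| interior_subset <| hsub <| Or.inl <|
    subset_closure ⟨s, hs, rfl⟩

theorem IsZFilter.exists_zUltra_core_eq {L : Set (Set S)} (hL : IsZFilter S F L) {ν : specF S F}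
    (hν : ν ∈ core S F L) : ∃ p ∈ zUltra S F, L ⊆ p ∧ core S F p = {ν} := by
  have hN := isZFilter_nhdsZ ν
  have hbase : IsZFilter S F {Z ∈ ZSet S F | ∃ B ∈ image2 (· ∩ ·) L (nhdsZ ν), B ⊆ Z} := by
    refine isZFilter_of_base ⟨_, mem_image2_of_mem hL.2.2.1 hN.2.2.1⟩ ?_ ?_
    · rintro ⟨B, hB, H, hH, hBH⟩
      exact (inter_nonempty_of_mem_epsCl (mem_iInter₂.1 hν B hB) hH).ne_empty hBH
    · rintro _ ⟨B₁, hB₁, H₁, hH₁, rfl⟩ _ ⟨B₂, hB₂, H₂, hH₂, rfl⟩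
      exact ⟨_, mem_image2_of_mem (hL.2.2.2.1 B₁ hB₁ B₂ hB₂) (hN.2.2.2.1 H₁ hH₁ H₂ hH₂),
        fun s ⟨⟨h₁, h₂⟩, h₁', h₂'⟩ => ⟨⟨h₁, h₁'⟩, h₂, h₂'⟩⟩
  obtain ⟨p, hp, hsub⟩ := hbase.exists_zUltra_superset
  have hLp : L ⊆ p := fun B hB =>
    hsub ⟨hL.1 hB, _, mem_image2_of_mem hB hN.2.2.1, inter_subset_left⟩
  have hNp : nhdsZ ν ⊆ p := fun H hH =>
    hsub ⟨hH.1, _, mem_image2_of_mem hL.2.2.1 hH, inter_subset_right⟩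
  exact ⟨p, hp, hLp, hp.1.core_nonempty.subset_singleton_iff.1
    (core_subset_singleton_of_nhdsZ_subset hNp)⟩

theorem exists_zUltra_core_eq (ν : specF S F) : ∃ p ∈ zUltra S F, core S F p = {ν} :=
  let ⟨p, hp, _, hcore⟩ := (isZFilter_nhdsZ ν).exists_zUltra_core_eq (mem_core_nhdsZ ν)
  ⟨p, hp, hcore⟩

theorem barSet_subset_core (L : Set (Set S)) : barSet S F L ⊆ core S F L := by
  rintro μ ⟨p, -, hLp, hcore⟩
  have hμ : μ ∈ core S F p := hcore ▸ mem_singleton μ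
  exact biInter_subset_biInter_left hLp hμ

theorem IsZFilter.barSet_eq_core {L : Set (Set S)} (hL : IsZFilter S F L) :
    barSet S F L = core S F L :=
  (barSet_subset_core L).antisymm fun _ hν => hL.exists_zUltra_core_eq hν

theorem core_subset_of_forall_mem {D : Set (Set S)} {K : Set (specF S F)} (hK : IsClosed K)
    (h : ∀ H ∈ ZSet S F, K ⊆ interior (epsCl S F H) → H ∈ D) : core S F D ⊆ K := by
  intro x hx
  by_contra hxK
  obtain ⟨H, hH, hKH, hHx⟩ := exists_zeroSet_separating hK isClosed_singleton
    (disjoint_singleton_right.2 hxK)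
  exact disjoint_singleton_right.1 hHx (mem_iInter₂.1 hx H (h H hH hKH))

end ZFilters

namespace IsQuotientOf

omit [T2Space S]

variable {S F} {Γ : Set (Set (Set S))}

theorem isZFilter (hQ : IsQuotientOf S F Γ) {L : Set (Set S)} (hL : L ∈ Γ) : IsZFilter S F L :=
  (hQ.1 L hL).1

theorem eq_of_mem_barSet (hQ : IsQuotientOf S F Γ) {L K : Set (Set S)} (hL : L ∈ Γ) (hK : K ∈ Γ)
    {μ : specF S F} (hμL : μ ∈ barSet S F L) (hμK : μ ∈ barSet S F K) : L = K := by
  by_contra hne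
  obtain ⟨A, hA, B, hB, hdich⟩ := hQ.2.2 L hL K hK hne
  have hμ : μ ∈ core S F L := barSet_subset_core L hμL
  rcases hdich L hL with h | h
  · exact core_subset_of_forall_mem isOpen_interior.isClosed_compl h hμ (hA.2 hμL)
  · exact core_subset_of_forall_mem isOpen_interior.isClosed_compl h hμ (hB.2 hμK)

variable {γ : specF S F → Γ}

theorem mem_barSet_gamma (hγ : IsGamma S F Γ γ) (ν : specF S F) :
    ν ∈ barSet S F (γ ν : Set (Set S)) := by
  obtain ⟨p, hp, hcore⟩ := exists_zUltra_core_eq ν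
  exact ⟨p, hp, (hγ ν p hp hcore).trans (sInter_subset_of_mem ⟨hp, rfl⟩), hcore⟩

theorem gamma_eq_iff (hQ : IsQuotientOf S F Γ) (hγ : IsGamma S F Γ γ) {ν : specF S F} {L : Γ} :
    γ ν = L ↔ ν ∈ core S F (L : Set (Set S)) := by
  rw [← (hQ.isZFilter L.2).barSet_eq_core]
  exact ⟨fun h => h ▸ mem_barSet_gamma hγ ν,
    fun h => Subtype.ext (hQ.eq_of_mem_barSet (γ ν).2 L.2 (mem_barSet_gamma hγ ν) h)⟩

theorem surjective_gamma (hQ : IsQuotientOf S F Γ) (hγ : IsGamma S F Γ γ) :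
    Function.Surjective γ := fun L =>
  let ⟨ν, hν⟩ := (hQ.isZFilter L.2).core_nonempty
  ⟨ν, (hQ.gamma_eq_iff hγ).2 hν⟩

theorem compl_starSet_eq (hQ : IsQuotientOf S F Γ) (A : Set S) :
    (starSet S F Γ A)ᶜ = {L : Γ | Disjoint (core S F (L : Set (Set S))) (epsCl S F A)} := by
  ext L
  simp [starSet, (hQ.isZFilter L.2).barSet_eq_core, not_nonempty_iff_eq_empty,
    disjoint_iff_inter_eq_empty]

theorem isOpen_setOf_disjoint_core (hQ : IsQuotientOf S F Γ) (hγ : IsGamma S F Γ γ)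
    {K : Set (specF S F)} (hK : IsClosed K) :
    IsOpen {ν | Disjoint (core S F (γ ν : Set (Set S))) K} := by
  refine isOpen_iff_forall_mem_open.2 fun ν₀ hν₀ => ?_
  obtain ⟨L₀, hL₀⟩ : ∃ L₀, γ ν₀ = L₀ := ⟨_, rfl⟩
  rw [mem_ofPred_eq, hL₀] at hν₀
  have hL₀F := hQ.isZFilter L₀.2
  obtain ⟨E, hEL₀, hcoreE, hEK⟩ := hL₀F.exists_mem_core_subset_interior hK hν₀
  choose! a ha b hb hab using hQ.2.2
  set f : Set (Set S) → Set S := fun C => if C = L₀ then E else a C L₀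
  have hf : IsTCF S F Γ f := by
    intro C hC
    by_cases hCL : C = L₀
    · simp only [f, hCL, hL₀F.barSet_eq_core]
      exact ⟨hEL₀, hcoreE⟩
    · simp only [f, if_neg hCL]
      exact ha C hC L₀ L₀.2 hCL
  obtain ⟨𝓕, h𝓕Γ, hcover⟩ := hQ.2.1 f hf
  refine ⟨interior (epsCl S F E) ∩
      ⋂ C ∈ 𝓕.filter (· ≠ (L₀ : Set (Set S))), interior (epsCl S F (b C L₀)),
    fun ν ⟨_, hνb⟩ => hEK.mono_left fun x hx => ?_,
    isOpen_interior.inter (isOpen_biInter_finset fun _ _ => isOpen_interior),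
    hcoreE ((hQ.gamma_eq_iff hγ).1 hL₀), mem_iInter₂.2 fun C hC => ?_⟩
  · obtain ⟨C, hC𝓕, hxC⟩ := mem_iUnion₂.1 (hcover ▸ mem_univ x)
    by_cases hCL : C = L₀
    · simpa [f, hCL] using interior_subset hxC
    exfalso
    simp only [f, if_neg hCL] at hxC
    rcases hab C (h𝓕Γ hC𝓕) L₀ L₀.2 hCL (γ ν) (γ ν).2 with h | h
    · exact core_subset_of_forall_mem isOpen_interior.isClosed_compl h hx hxC
    · exact core_subset_of_forall_mem isOpen_interior.isClosed_compl h
        ((hQ.gamma_eq_iff hγ).1 rfl) (mem_iInter₂.1 hνb C (Finset.mem_filter.2 ⟨hC𝓕, hCL⟩))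
  · exact (hb C (h𝓕Γ (Finset.mem_filter.1 hC).1) L₀ L₀.2 (Finset.mem_filter.1 hC).2).2
      (hL₀ ▸ mem_barSet_gamma hγ ν₀)

theorem isOpen_of_isOpen_preimage (hQ : IsQuotientOf S F Γ) (hγ : IsGamma S F Γ γ) {U : Set Γ}
    (hU : IsOpen (γ ⁻¹' U)) : IsOpen[tauStar S F Γ] U := by
  let := tauStar S F Γ
  refine isOpen_iff_forall_mem_open.2 fun L hL => ?_
  have hcore : core S F (L : Set (Set S)) ⊆ γ ⁻¹' U := fun x hx => by
    rwa [mem_preimage, (hQ.gamma_eq_iff hγ).2 hx]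
  obtain ⟨H, hH, hUH, hHL⟩ := exists_zeroSet_separating hU.isClosed_compl
    (isClosed_biInter fun _ _ => isClosed_closure) (disjoint_compl_left.mono_right hcore)
  refine ⟨(starSet S F Γ H)ᶜ, fun C hC => ?_,
    TopologicalSpace.isOpen_generateFrom_of_mem ⟨H, hH, rfl⟩, hQ.compl_starSet_eq H ▸ hHL.symm⟩
  rw [hQ.compl_starSet_eq H] at hC
  obtain ⟨x, hx⟩ := (hQ.isZFilter C.2).core_nonempty
  have hxU : x ∈ γ ⁻¹' U := by_contra fun hxU => hC.ne_of_mem hx (interior_subset (hUH hxU)) rfl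
  rwa [mem_preimage, (hQ.gamma_eq_iff hγ).2 hx] at hxU

theorem continuous_gamma (hQ : IsQuotientOf S F Γ) (hγ : IsGamma S F Γ γ) :
    Continuous[_, tauStar S F Γ] γ :=
  continuous_generateFrom_iff.2 fun _ ⟨A, _, hU⟩ => by
    rw [hU, hQ.compl_starSet_eq A]
    exact hQ.isOpen_setOf_disjoint_core hγ isClosed_closure

end IsQuotientOf

theorem statement6
    (Γ : Set (Set (Set S))) (hQ : IsQuotientOf S F Γ)
    (γ : specF S F → Γ) (hγ : IsGamma S F Γ γ) :
    @IsQuotientMap (specF S F) Γ inferInstance (tauStar S F Γ) γ := by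
  let := tauStar S F Γ
  exact ⟨isCoinducing_iff.2 fun U =>
    ⟨hQ.isOpen_of_isOpen_preimage hγ, (hQ.continuous_gamma hγ).isOpen_preimage U⟩,
    hQ.surjective_gamma hγ⟩

end
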